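/- Let X and Y be sets and t ≥ 1. Let T, T' ⊆ X × Y be two doubly-unique t-element subsets (all first coordinates within T pairwise distinct, all second coordinates within T pairwise distinct, and likewise for T'), and suppose d := |T ∖ T'| ≥ 1. View T ∪ T' as the edge set of a bipartite graph on X ⊔ Y, let ℓ be its number of bipartite components (connected components containing at least one edge), let u be its number of incident vertices, and set k := ℓ − (t − d). Then: (a) 1 ≤ k ≤ 2d; and (b) 2t + ⌈(4k − 2d)/3⌉ ≤ u ≤ 2t + k. -/

import Mathlib

open scoped BigOperators ComplexOrder

namespace DT

noncomputable section

abbrev Bits (k : ℕ) := Fin k → Bool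

/-- Trace norm of a complex square matrix: the sum of its singular values,
computed as the trace of `√(Xᴴ X)`. -/
def traceNorm {ι : Type*} [Fintype ι] [DecidableEq ι] (X : Matrix ι ι ℂ) : ℝ :=
  (((Matrix.posSemidef_conjTranspose_mul_self X).1.eigenvectorUnitary : Matrix ι ι ℂ) *
      Matrix.diagonal (fun i => ((Real.sqrt
        ((Matrix.posSemidef_conjTranspose_mul_self X).1.eigenvalues i) : ℝ) : ℂ)) *
      (star (Matrix.posSemidef_conjTranspose_mul_self X).1.eigenvectorUnitary :
        Matrix ι ι ℂ)).trace.re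

/-- `t`-fold tensor (Kronecker) power of a square matrix. -/
def tpow {ι : Type*} (t : ℕ) (M : Matrix ι ι ℂ) : Matrix (Fin t → ι) (Fin t → ι) ℂ :=
  Matrix.of fun x y => ∏ i, M (x i) (y i)

/-- Outer product `|ψ⟩⟨ψ|`. -/
def outer {ι : Type*} (ψ : ι → ℂ) : Matrix ι ι ℂ :=
  Matrix.of fun x y => ψ x * (starRingEnd ℂ) (ψ y)

/-- Orthogonal projector onto the symmetric subspace of `(ℂ^ι)^{⊗ t}`. -/
def symProj (ι : Type*) [DecidableEq ι] (t : ℕ) : Matrix (Fin t → ι) (Fin t → ι) ℂ :=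
  (t.factorial : ℂ)⁻¹ • ∑ σ : Equiv.Perm (Fin t),
    Matrix.of fun x y => if x = y ∘ σ then (1 : ℂ) else 0

/-- `t`-th moment operator of a Haar random state on `ℂ^ι`. -/
def haarMoment (ι : Type*) [Fintype ι] [DecidableEq ι] (t : ℕ) :
    Matrix (Fin t → ι) (Fin t → ι) ℂ :=
  ((Fintype.card ι + t - 1).choose t : ℂ)⁻¹ • symProj ι t

/-- Orthogonal projector onto `Sym^t(S)`, the symmetric subspace of `t` copies of
the span of the computational basis vectors indexed by `S`. -/
def symProjOn {ι : Type*} [DecidableEq ι] (S : Finset ι) (t : ℕ) :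
    Matrix (Fin t → ι) (Fin t → ι) ℂ :=
  (t.factorial : ℂ)⁻¹ • ∑ σ : Equiv.Perm (Fin t),
    Matrix.of fun x y => if (∀ i, x i ∈ S) ∧ x = y ∘ σ then (1 : ℂ) else 0

/-- `(-1)^v` for a bit `v`. -/
def sgn (v : Bool) : ℂ := if v then -1 else 1

/-- Subset-phase state. -/
def subsetPhase {ι : Type*} [DecidableEq ι] (S : Finset ι) (f : ι → Bool) : ι → ℂ :=
  fun x => if x ∈ S then sgn (f x) / (Real.sqrt S.card : ℂ) else 0

/-- Subset state. -/
def subsetState {ι : Type*} [DecidableEq ι] (S : Finset ι) : ι → ℂ :=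
  subsetPhase S fun _ => false

/-- `S` is a Schmidt-patch (glued) subset: a disjoint union of `R` products of
pairwise disjoint `M`-element subsets. -/
def IsPatch {X Y : Type*} [DecidableEq X] [DecidableEq Y] (M R : ℕ) (S : Finset (X × Y)) : Prop :=
  ∃ (A : Fin R → Finset X) (B : Fin R → Finset Y),
    (∀ j, (A j).card = M) ∧ (∀ j, (B j).card = M) ∧
      (∀ i j, i ≠ j → Disjoint (A i) (A j)) ∧
      (∀ i j, i ≠ j → Disjoint (B i) (B j)) ∧
      S = Finset.univ.biUnion fun j => A j ×ˢ B j

open Classical in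
/-- The family `F_{M,R}` of Schmidt-patch subsets of `X × Y`. -/
def patchFamily (X Y : Type*) [Fintype X] [Fintype Y] [DecidableEq X] [DecidableEq Y]
    (M R : ℕ) : Finset (Finset (X × Y)) :=
  Finset.univ.filter fun S => IsPatch M R S

/-- The graph on the edges of `P` relating edges sharing a left or right endpoint;
its connected components are the bipartite components of `P`. -/
def compGraph {X Y : Type*} (P : Finset (X × Y)) : SimpleGraph {e : X × Y // e ∈ P} :=
  SimpleGraph.fromRel fun e e' => (e : X × Y).1 = (e' : X × Y).1 ∨ (e : X × Y).2 = (e' : X × Y).2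

/-- Number of bipartite components (connected components containing at least one edge). -/
def numComponents {X Y : Type*} (P : Finset (X × Y)) : ℕ :=
  Nat.card (compGraph P).ConnectedComponent

/-- Number of vertices incident to at least one edge of `P` (total unique half-strings). -/
def numVerts {X Y : Type*} [DecidableEq X] [DecidableEq Y] (P : Finset (X × Y)) : ℕ :=
  (P.image Prod.fst).card + (P.image Prod.snd).card

/-- A doubly-unique subset of `X × Y`: all first coordinates are pairwise distinct and
all second coordinates are pairwise distinct. -/
def DoublyUnique {X Y : Type*} (T : Finset (X × Y)) : Prop :=
  (∀ e ∈ T, ∀ e' ∈ T, Prod.fst e = Prod.fst e' → e = e') ∧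
    (∀ e ∈ T, ∀ e' ∈ T, Prod.snd e = Prod.snd e' → e = e')

/-- Cyclic predecessor on `Fin m`. -/
def cpred {m : ℕ} (i : Fin m) : Fin m := ⟨((i : ℕ) + (m - 1)) % m, Nat.mod_lt _ i.pos⟩

/-- Large-brick phase state on `n = 2·m·b` qubits.  The `2m` blocks of `b` bits are indexed by
`Fin m × Bool`, where `(i, false)` is block `x_{2i+1}` and `(i, true)` is block `x_{2i+2}`
of the paper; `f i` acts on blocks `(x_{2i+1}, x_{2i+2})` and `g i` acts on the preceding
overlapping pair of blocks (cyclically). -/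
def lbps (m b : ℕ) (f g : Fin m → (Bits b × Bits b) → Bool) :
    ((Fin m × Bool) → Bits b) → ℂ :=
  fun x =>
    ((∏ i : Fin m, sgn (f i (x (i, false), x (i, true)))) *
        ∏ i : Fin m, sgn (g i (x (cpred i, true), x (i, false)))) /
      (Real.sqrt (2 ^ (2 * m * b)) : ℂ)

/-- Combine retained bits `a` (on positions `P p`) and measured bits `β` into full blocks. -/
def combine {m b : ℕ} (P : Fin m × Bool → Finset (Fin b))
    (a : ∀ p, {r : Fin b // r ∈ P p} → Bool)
    (β : ∀ p, {r : Fin b // r ∉ P p} → Bool) : (Fin m × Bool) → Bits b :=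
  fun p r => if h : r ∈ P p then a p ⟨r, h⟩ else β p ⟨r, h⟩

/-- Normalized post-measurement state of a large-brick phase state on the retained positions,
for measurement outcome `β`: a brickwork phase state with restricted brick functions. -/
def postState (m b : ℕ) (f g : Fin m → (Bits b × Bits b) → Bool)
    (P : Fin m × Bool → Finset (Fin b))
    (β : ∀ p, {r : Fin b // r ∉ P p} → Bool) :
    (∀ p, {r : Fin b // r ∈ P p} → Bool) → ℂ :=
  fun a =>
    ((∏ i : Fin m, sgn (f i (combine P a β (i, false), combine P a β (i, true)))) *
        ∏ i : Fin m, sgn (g i (combine P a β (cpred i, true), combine P a β (i, false)))) /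
      (Real.sqrt (2 ^ (∑ p : Fin m × Bool, (P p).card)) : ℂ)

/-- Reduced density matrix on the first factor of a pure state on `X × Y`. -/
def reducedProd {X Y : Type*} [Fintype Y] (ψ : X × Y → ℂ) : Matrix X X ℂ :=
  Matrix.of fun x x' => ∑ y, ψ (x, y) * (starRingEnd ℂ) (ψ (x', y))

/-- Reduced density matrix of a multi-qubit pure state on the qubits in `A`. -/
def reducedOn {Q : Type*} [Fintype Q] [DecidableEq Q] (A : Finset Q)
    (ψ : (Q → Bool) → ℂ) :
    Matrix ({q : Q // q ∈ A} → Bool) ({q : Q // q ∈ A} → Bool) ℂ :=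
  Matrix.of fun a a' => ∑ c : {q : Q // q ∉ A} → Bool,
    ψ (fun q => if h : q ∈ A then a ⟨q, h⟩ else c ⟨q, h⟩) *
      (starRingEnd ℂ) (ψ fun q => if h : q ∈ A then a' ⟨q, h⟩ else c ⟨q, h⟩)

/-- Ring position of a qubit of a large-brick state: qubit `r` of block `(i, s)`. -/
def qpos (m b : ℕ) (q : (Fin m × Bool) × Fin b) : ℕ :=
  (2 * (q.1.1 : ℕ) + if q.1.2 then 1 else 0) * b + (q.2 : ℕ)

/-- `A` is a contiguous arc of qubits with respect to the ring order on the `n = 2mb` qubits. -/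
def IsArc (m b : ℕ) (A : Finset ((Fin m × Bool) × Fin b)) : Prop :=
  ∃ s len : ℕ, ∀ q, q ∈ A ↔ ∃ j < len, qpos m b q % (2 * m * b) = (s + j) % (2 * m * b)

/-- Schmidt-patch subset-phase state determined by patches `A_j × B_j` and phase function `f`. -/
def spState {X Y : Type*} [DecidableEq X] [DecidableEq Y] (R M : ℕ)
    (A : Fin R → Finset X) (B : Fin R → Finset Y)
    (f : X × Y → Bool) : X × Y → ℂ :=
  fun e => if ∃ j, e.1 ∈ A j ∧ e.2 ∈ B j then sgn (f e) / ((M : ℂ) * (Real.sqrt R : ℂ)) else 0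

section AuxLemmas


variable {V : Type*} [Fintype V] [DecidableEq V] (G : SimpleGraph V) [DecidableRel G.Adj]



open Classical in
lemma gen3 : Nat.card G.ConnectedComponent ≤ Fintype.card V := by
  have h : Function.Surjective (G.connectedComponentMk) := Quot.exists_rep
  simpa using Nat.card_le_card_of_surjective _ h

open Classical in
lemma gen1 : Fintype.card V ≤ G.edgeFinset.card + Nat.card G.ConnectedComponent := by
  set rep : V → V := fun v => (G.connectedComponentMk v).out with hrep
  have hout : ∀ v, G.connectedComponentMk (rep v) = G.connectedComponentMk v := fun v =>
    (G.connectedComponentMk v).out_eq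
  have hreach : ∀ v, G.Reachable v (rep v) := fun v =>
    (SimpleGraph.ConnectedComponent.eq.mp (hout v).symm)
  have hrepeq : ∀ v v', G.connectedComponentMk v = G.connectedComponentMk v' → rep v = rep v' := by
    intro v v' h; simp only [hrep, h]
  have key : ∀ v : V, v ≠ rep v → ∃ w, G.Adj v w ∧ G.dist w (rep v) < G.dist v (rep v) := by
    intro v hv
    have hpos : 0 < G.dist v (rep v) := (hreach v).pos_dist_of_ne hv
    obtain ⟨p, hp⟩ := (hreach v).exists_walk_length_eq_dist
    have hnn : ¬ p.Nil := by
      rw [SimpleGraph.Walk.nil_iff_length_eq]; omega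
    obtain ⟨u, h, q, rfl⟩ := SimpleGraph.Walk.not_nil_iff.mp hnn
    refine ⟨u, h, ?_⟩
    have := SimpleGraph.dist_le q
    simp [SimpleGraph.Walk.length_cons] at hp
    omega
  choose w hw hlt using key
  set S : Finset V := Finset.univ.filter (fun v => ¬ (v = rep v)) with hS
  set R : Finset V := Finset.univ.filter (fun v => v = rep v) with hR
  have hsplit : R.card + S.card = Fintype.card V := by
    rw [hR, hS, Finset.card_filter_add_card_filter_not]
    rfl
  have hScard : S.card ≤ G.edgeFinset.card := by
    refine Finset.card_le_card_of_injOn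
      (fun v => if h : v = rep v then s(v, v) else s(v, w v h)) ?_ ?_
    · intro v hv
      have hv' : ¬ (v = rep v) := by simpa [hS] using hv
      simp only [dif_neg hv']
      exact SimpleGraph.mem_edgeFinset.mpr (hw v hv')
    · intro v hv v' hv' heq
      have h1 : ¬ (v = rep v) := by simpa [hS] using hv
      have h2 : ¬ (v' = rep v') := by simpa [hS] using hv'
      simp only [dif_neg h1, dif_neg h2, Sym2.eq_iff] at heq
      rcases heq with ⟨h, -⟩ | ⟨ha, hb⟩
      · exact h
      · exfalso
        have hadj : G.Adj v v' := by
          have := hw v' h2; rw [← ha] at this; exact this.symm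
        have hrr : rep v = rep v' :=
          hrepeq v v' (SimpleGraph.ConnectedComponent.sound hadj.reachable)
        have l1 := hlt v h1
        have l2 := hlt v' h2
        rw [hb] at l1
        rw [← ha, ← hrr] at l2
        omega
  have hRcard : R.card ≤ Nat.card G.ConnectedComponent := by
    have : R.card = Nat.card {v : V // v ∈ R} := by
      simp [Nat.card_eq_fintype_card, Fintype.card_coe]
    rw [this]
    refine Nat.card_le_card_of_injective
      (fun v => G.connectedComponentMk v.1) ?_
    intro ⟨v, hv⟩ ⟨v', hv'⟩ h
    have h1 : v = rep v := by simpa [hR] using hv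
    have h2 : v' = rep v' := by simpa [hR] using hv'
    have := hrepeq v v' h
    simp only [Subtype.mk_eq_mk]
    rw [h1, h2, this]
  omega

open Classical in
lemma gen2 (hdeg : ∀ v, G.degree v ≤ 2)
    (htri : ∀ a b c : V, G.Adj a b → G.Adj a c → G.Adj b c → False) :
    8 * Nat.card G.ConnectedComponent + 6 * G.edgeFinset.card ≤ 8 * Fintype.card V := by
  have : Fintype G.ConnectedComponent := Fintype.ofFinite _
  have percomp : ∀ c : G.ConnectedComponent,
      (8:ℤ) ≤ ∑ v ∈ Finset.univ.filter (fun v => G.connectedComponentMk v = c),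
        (8 - 3 * (G.degree v : ℤ)) := by
    intro c
    set S := Finset.univ.filter (fun v => G.connectedComponentMk v = c) with hSdef
    have hsub : ∀ v ∈ S, G.neighborFinset v ⊆ S.erase v := by
      intro v hv u hu
      rw [SimpleGraph.mem_neighborFinset] at hu
      refine Finset.mem_erase.mpr ⟨hu.ne', ?_⟩
      have hvc : G.connectedComponentMk v = c := by simpa [hSdef] using hv
      simp only [hSdef, Finset.mem_filter, Finset.mem_univ, true_and]
      rw [← hvc]
      exact SimpleGraph.ConnectedComponent.sound hu.symm.reachable
    have hdegS : ∀ v ∈ S, G.degree v + 1 ≤ S.card := by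
      intro v hv
      have h1 : G.degree v ≤ (S.erase v).card :=
        Finset.card_le_card (hsub v hv)
      have h2 : (S.erase v).card + 1 = S.card := by
        rw [Finset.card_erase_of_mem hv]
        have : 1 ≤ S.card := Finset.card_pos.mpr ⟨v, hv⟩
        omega
      omega
    have hne : S.Nonempty := ⟨c.out, Finset.mem_filter.mpr ⟨Finset.mem_univ _, c.out_eq⟩⟩
    have hterm2 : ∀ v ∈ S, (2:ℤ) ≤ 8 - 3 * (G.degree v : ℤ) := by
      intro v _; have := hdeg v
      have : (G.degree v : ℤ) ≤ 2 := by exact_mod_cast this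
      linarith
    have hsum2 : (2:ℤ) * S.card ≤ ∑ v ∈ S, (8 - 3 * (G.degree v : ℤ)) := by
      calc (2:ℤ) * S.card = ∑ _v ∈ S, (2:ℤ) := by rw [Finset.sum_const]; ring
        _ ≤ _ := Finset.sum_le_sum hterm2
    rcases Nat.lt_or_ge S.card 4 with hlt | hge
    swap
    · have : (8:ℤ) ≤ 2 * S.card := by
        have : (4:ℤ) ≤ (S.card : ℤ) := by exact_mod_cast hge
        linarith
      linarith
    · interval_cases h : S.card
      · exact absurd h (by simpa [Finset.card_eq_zero, ← Finset.not_nonempty_iff_eq_empty] using hne.ne_empty)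
      · obtain ⟨v, hv⟩ := Finset.card_eq_one.mp h
        have hvS : v ∈ S := by rw [hv]; exact Finset.mem_singleton_self v
        have hd' := hdegS v hvS
        rw [hv, Finset.sum_singleton]
        have hd0 : G.degree v = 0 := by omega
        simp [hd0]
      · have : ∀ v ∈ S, (5:ℤ) ≤ 8 - 3 * (G.degree v : ℤ) := by
          intro v hv
          have hd' := hdegS v hv
          have hd'' : G.degree v ≤ 1 := by omega
          have : (G.degree v : ℤ) ≤ 1 := by exact_mod_cast hd''
          linarith
        calc (8:ℤ) ≤ 2 * 5 := by norm_num
          _ = ∑ _v ∈ S, (5:ℤ) := by rw [Finset.sum_const, h]; ring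
          _ ≤ _ := Finset.sum_le_sum this
      · -- card = 3 : find a vertex of degree ≤ 1
        have hex : ∃ v ∈ S, G.degree v ≤ 1 := by
          by_contra hcon
          push_neg at hcon
          have hall : ∀ v ∈ S, G.neighborFinset v = S.erase v := by
            intro v hv
            refine Finset.eq_of_subset_of_card_le (hsub v hv) ?_
            rw [Finset.card_erase_of_mem hv, h]
            have h2 := hcon v hv
            rw [SimpleGraph.card_neighborFinset_eq_degree]
            omega
          obtain ⟨a, b, cc, hab, hac, hbc, hS3⟩ := Finset.card_eq_three.mp h
          have haS : a ∈ S := by rw [hS3]; exact Finset.mem_insert_self _ _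
          have hbS : b ∈ S := by
            rw [hS3]; exact Finset.mem_insert_of_mem (Finset.mem_insert_self _ _)
          have hcS : cc ∈ S := by
            rw [hS3]
            exact Finset.mem_insert_of_mem (Finset.mem_insert_of_mem (Finset.mem_singleton_self _))
          have hadj : ∀ x y, x ∈ S → y ∈ S → x ≠ y → G.Adj x y := by
            intro x y hx hy hxy
            have : y ∈ G.neighborFinset x := by
              rw [hall x hx, Finset.mem_erase]; exact ⟨hxy.symm, hy⟩
            rwa [SimpleGraph.mem_neighborFinset] at this
          exact htri a b cc (hadj a b haS hbS hab) (hadj a cc haS hcS hac)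
            (hadj b cc hbS hcS hbc)
        obtain ⟨v0, hv0, hd1⟩ := hex
        have hsplit := Finset.add_sum_erase S (fun v => 8 - 3 * (G.degree v : ℤ)) hv0
        have hterm : (5:ℤ) ≤ 8 - 3 * (G.degree v0 : ℤ) := by
          have : (G.degree v0 : ℤ) ≤ 1 := by exact_mod_cast hd1
          linarith
        have hrest : (2:ℤ) * (S.erase v0).card ≤
            ∑ v ∈ S.erase v0, (8 - 3 * (G.degree v : ℤ)) := by
          calc (2:ℤ) * (S.erase v0).card = ∑ _v ∈ S.erase v0, (2:ℤ) := by
                rw [Finset.sum_const]; ring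
            _ ≤ _ := Finset.sum_le_sum (fun v hv => hterm2 v (Finset.mem_of_mem_erase hv))
        rw [← hsplit]
        have : (S.erase v0).card = 2 := by rw [Finset.card_erase_of_mem hv0, h]
        rw [this] at hrest
        push_cast at hrest
        linarith
  -- sum over components
  have htot : (8:ℤ) * (Fintype.card G.ConnectedComponent) ≤
      ∑ v : V, (8 - 3 * (G.degree v : ℤ)) := by
    rw [← Finset.sum_fiberwise Finset.univ (fun v => G.connectedComponentMk v)
      (fun v => 8 - 3 * (G.degree v : ℤ))]
    calc (8:ℤ) * (Fintype.card G.ConnectedComponent)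
        = ∑ _c : G.ConnectedComponent, (8:ℤ) := by rw [Finset.sum_const]; simp [mul_comm]
      _ ≤ _ := Finset.sum_le_sum (fun c _ => percomp c)
  have hdegsum : ∑ v : V, (G.degree v : ℤ) = 2 * G.edgeFinset.card := by
    exact_mod_cast congrArg (Nat.cast : ℕ → ℤ) G.sum_degrees_eq_twice_card_edges
  have hexp : ∑ v : V, (8 - 3 * (G.degree v : ℤ)) =
      8 * Fintype.card V - 6 * G.edgeFinset.card := by
    rw [Finset.sum_sub_distrib, Finset.sum_const, ← Finset.mul_sum, hdegsum]
    simp [mul_comm]; ring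
  rw [hexp] at htot
  have hcard : Nat.card G.ConnectedComponent = Fintype.card G.ConnectedComponent :=
    Nat.card_eq_fintype_card
  rw [hcard]
  have := htot
  omega



end AuxLemmas

/-- structure of the union of two doubly-unique `t`-subsets at set distance
`d ≥ 1`: bounds on the number `ℓ = t - d + k` of bipartite components and on the number `u`
of incident vertices. -/
theorem doubly_unique_union_components {X Y : Type*} [DecidableEq X] [DecidableEq Y]
    (t : ℕ) (ht : 1 ≤ t) (T T' : Finset (X × Y))
    (hT : T.card = t) (hT' : T'.card = t)
    (hdu : DoublyUnique T) (hdu' : DoublyUnique T')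
    (hd : 1 ≤ (T \ T').card) :
    (1 ≤ (numComponents (T ∪ T') : ℤ) - ((t : ℤ) - ((T \ T').card : ℤ)) ∧
        (numComponents (T ∪ T') : ℤ) - ((t : ℤ) - ((T \ T').card : ℤ)) ≤
          2 * ((T \ T').card : ℤ)) ∧
      (2 * (t : ℤ) +
          Int.ceil ((4 * ((numComponents (T ∪ T') : ℚ) - ((t : ℚ) - ((T \ T').card : ℚ))) -
              2 * ((T \ T').card : ℚ)) / 3) ≤ (numVerts (T ∪ T') : ℤ) ∧
        (numVerts (T ∪ T') : ℤ) ≤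
          2 * (t : ℤ) + ((numComponents (T ∪ T') : ℤ) - ((t : ℤ) - ((T \ T').card : ℤ)))) := by
  classical
  set P : Finset (X × Y) := T ∪ T' with hPdef
  have hsubT : T ⊆ P := Finset.subset_union_left
  have hsubT' : T' ⊆ P := Finset.subset_union_right
  set G := compGraph P with hGdef
  letI : DecidableRel G.Adj := Classical.decRel _
  -- basic matching facts
  have factFst : ∀ a b c : X × Y, a ∈ P → b ∈ P → c ∈ P →
      a ≠ b → a ≠ c → b ≠ c → a.1 = b.1 → a.1 = c.1 → False := by
    intro a b c ha hb hc hab hac hbc h1 h2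
    rcases Finset.mem_union.mp ha with ha | ha <;>
    rcases Finset.mem_union.mp hb with hb | hb <;>
    rcases Finset.mem_union.mp hc with hc | hc <;>
    first
      | exact hab (hdu.1 a ha b hb h1)
      | exact hab (hdu'.1 a ha b hb h1)
      | exact hac (hdu.1 a ha c hc h2)
      | exact hac (hdu'.1 a ha c hc h2)
      | exact hbc (hdu.1 b hb c hc (h1.symm.trans h2))
      | exact hbc (hdu'.1 b hb c hc (h1.symm.trans h2))
  have factSnd : ∀ a b c : X × Y, a ∈ P → b ∈ P → c ∈ P →
      a ≠ b → a ≠ c → b ≠ c → a.2 = b.2 → a.2 = c.2 → False := by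
    intro a b c ha hb hc hab hac hbc h1 h2
    rcases Finset.mem_union.mp ha with ha | ha <;>
    rcases Finset.mem_union.mp hb with hb | hb <;>
    rcases Finset.mem_union.mp hc with hc | hc <;>
    first
      | exact hab (hdu.2 a ha b hb h1)
      | exact hab (hdu'.2 a ha b hb h1)
      | exact hac (hdu.2 a ha c hc h2)
      | exact hac (hdu'.2 a ha c hc h2)
      | exact hbc (hdu.2 b hb c hc (h1.symm.trans h2))
      | exact hbc (hdu'.2 b hb c hc (h1.symm.trans h2))
  have adjE : ∀ a b : {e : X × Y // e ∈ P}, G.Adj a b →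
      a ≠ b ∧ (a.val.1 = b.val.1 ∨ a.val.2 = b.val.2) := by
    intro a b h
    rw [hGdef, compGraph, SimpleGraph.fromRel_adj] at h
    obtain ⟨hne, h⟩ := h
    refine ⟨hne, ?_⟩
    rcases h with (h | h) | (h | h)
    exacts [Or.inl h, Or.inr h, Or.inl h.symm, Or.inr h.symm]
  -- fibers
  set xf : {e : X × Y // e ∈ P} → Finset {e : X × Y // e ∈ P} :=
    fun e => Finset.univ.filter (fun e' => e'.val.1 = e.val.1) with hxf
  set yf : {e : X × Y // e ∈ P} → Finset {e : X × Y // e ∈ P} :=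
    fun e => Finset.univ.filter (fun e' => e'.val.2 = e.val.2) with hyf
  have hxfself : ∀ e, e ∈ xf e := fun e => by simp [hxf]
  have hyfself : ∀ e, e ∈ yf e := fun e => by simp [hyf]
  have hxf2 : ∀ e, (xf e).card ≤ 2 := by
    intro e
    by_contra hcon
    push_neg at hcon
    obtain ⟨a, b, c, ha, hb, hc, hab, hac, hbc⟩ := Finset.two_lt_card_iff.mp hcon
    simp only [hxf, Finset.mem_filter, Finset.mem_univ, true_and] at ha hb hc
    exact factFst a.val b.val c.val a.2 b.2 c.2
      (Subtype.coe_ne_coe.mpr hab) (Subtype.coe_ne_coe.mpr hac) (Subtype.coe_ne_coe.mpr hbc)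
      (ha.trans hb.symm) (ha.trans hc.symm)
  have hyf2 : ∀ e, (yf e).card ≤ 2 := by
    intro e
    by_contra hcon
    push_neg at hcon
    obtain ⟨a, b, c, ha, hb, hc, hab, hac, hbc⟩ := Finset.two_lt_card_iff.mp hcon
    simp only [hyf, Finset.mem_filter, Finset.mem_univ, true_and] at ha hb hc
    exact factSnd a.val b.val c.val a.2 b.2 c.2
      (Subtype.coe_ne_coe.mpr hab) (Subtype.coe_ne_coe.mpr hac) (Subtype.coe_ne_coe.mpr hbc)
      (ha.trans hb.symm) (ha.trans hc.symm)
  -- neighbor structure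
  have hnbr : ∀ e, G.neighborFinset e = ((xf e).erase e) ∪ ((yf e).erase e) := by
    intro e
    ext e'
    simp only [SimpleGraph.mem_neighborFinset, Finset.mem_union, Finset.mem_erase,
      hxf, hyf, Finset.mem_filter, Finset.mem_univ, true_and]
    constructor
    · intro h
      obtain ⟨hne, h⟩ := adjE e e' h
      rcases h with h | h
      · exact Or.inl ⟨hne.symm, h.symm⟩
      · exact Or.inr ⟨hne.symm, h.symm⟩
    · rintro (⟨hne, h⟩ | ⟨hne, h⟩) <;>
      · rw [hGdef, compGraph, SimpleGraph.fromRel_adj]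
        exact ⟨hne.symm, Or.inr (by tauto)⟩
  have hdegeq : ∀ e, G.degree e + 2 = (xf e).card + (yf e).card := by
    intro e
    have hdisj : Disjoint ((xf e).erase e) ((yf e).erase e) := by
      rw [Finset.disjoint_left]
      intro a ha hb
      rw [Finset.mem_erase] at ha hb
      simp only [hxf, hyf, Finset.mem_filter, Finset.mem_univ, true_and] at ha hb
      exact ha.1 (Subtype.ext (Prod.ext ha.2 hb.2))
    have h1 : 1 ≤ (xf e).card := Finset.card_pos.mpr ⟨e, hxfself e⟩
    have h2 : 1 ≤ (yf e).card := Finset.card_pos.mpr ⟨e, hyfself e⟩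
    have : G.degree e = ((xf e).erase e).card + ((yf e).erase e).card := by
      rw [← SimpleGraph.card_neighborFinset_eq_degree, hnbr e,
        Finset.card_union_of_disjoint hdisj]
    rw [this, Finset.card_erase_of_mem (hxfself e), Finset.card_erase_of_mem (hyfself e)]
    omega
  have hdeg2 : ∀ e, G.degree e ≤ 2 := by
    intro e
    have := hdegeq e
    have := hxf2 e
    have := hyf2 e
    omega
  -- triangle-free
  have htri : ∀ a b c : {e : X × Y // e ∈ P},
      G.Adj a b → G.Adj a c → G.Adj b c → False := by
    intro a b c hab hac hbc
    obtain ⟨nab, hab⟩ := adjE a b hab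
    obtain ⟨nac, hac⟩ := adjE a c hac
    obtain ⟨nbc, hbc⟩ := adjE b c hbc
    have nab' := Subtype.coe_ne_coe.mpr nab
    have nac' := Subtype.coe_ne_coe.mpr nac
    have nbc' := Subtype.coe_ne_coe.mpr nbc
    rcases hab with h1 | h1 <;> rcases hac with h2 | h2 <;> rcases hbc with h3 | h3
    · exact factFst a.val b.val c.val a.2 b.2 c.2 nab' nac' nbc' h1 h2
    · exact factFst a.val b.val c.val a.2 b.2 c.2 nab' nac' nbc' h1 h2
    · exact factFst b.val a.val c.val b.2 a.2 c.2 nab'.symm nbc' nac' h1.symm h3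
    · exact factSnd c.val a.val b.val c.2 a.2 b.2 nac'.symm nbc'.symm nab' h2.symm h3.symm
    · exact factFst c.val a.val b.val c.2 a.2 b.2 nac'.symm nbc'.symm nab' h2.symm h3.symm
    · exact factSnd b.val a.val c.val b.2 a.2 c.2 nab'.symm nbc' nac' h1.symm h3
    · exact factSnd a.val b.val c.val a.2 b.2 c.2 nab' nac' nbc' h1 h2
    · exact factSnd a.val b.val c.val a.2 b.2 c.2 nab' nac' nbc' h1 h2
  -- counting sums
  have hcardV : Fintype.card {e : X × Y // e ∈ P} = P.card := Fintype.card_coe P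
  have hsumX : ∑ e : {e : X × Y // e ∈ P}, (3 - (xf e).card) =
      2 * (P.image Prod.fst).card := by
    rw [← Finset.sum_fiberwise_of_maps_to (g := fun e : {e : X × Y // e ∈ P} => e.val.1)
      (t := P.image Prod.fst) (fun e _ => Finset.mem_image_of_mem Prod.fst e.2)
      (fun e => 3 - (xf e).card)]
    rw [Finset.sum_congr rfl (fun y hy => ?_), Finset.sum_const, smul_eq_mul, mul_comm]
    obtain ⟨e0, he0P, he0⟩ := Finset.mem_image.mp hy
    have hfib : Finset.univ.filter (fun e : {e : X × Y // e ∈ P} =>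
        (fun e : {e : X × Y // e ∈ P} => e.val.1) e = y) = xf ⟨e0, he0P⟩ := by
      simp only [hxf]
      ext e
      simp [he0]
    rw [hfib]
    have hconst : ∀ e ∈ xf (⟨e0, he0P⟩ : {e : X × Y // e ∈ P}),
        3 - (xf e).card = 3 - (xf (⟨e0, he0P⟩ : {e : X × Y // e ∈ P})).card := by
      intro e he
      have hee : e.val.1 = e0.1 := by
        simpa [hxf] using he
      have : xf e = xf (⟨e0, he0P⟩ : {e : X × Y // e ∈ P}) := by
        simp only [hxf]
        ext e'
        simp [hee]
      rw [this]
    rw [Finset.sum_congr rfl hconst, Finset.sum_const]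
    have h1 : 1 ≤ (xf (⟨e0, he0P⟩ : {e : X × Y // e ∈ P})).card :=
      Finset.card_pos.mpr ⟨_, hxfself _⟩
    have h2 := hxf2 (⟨e0, he0P⟩ : {e : X × Y // e ∈ P})
    set s := (xf (⟨e0, he0P⟩ : {e : X × Y // e ∈ P})).card
    have : s = 1 ∨ s = 2 := by omega
    rcases this with h | h <;> rw [h] <;> rfl
  have hsumY : ∑ e : {e : X × Y // e ∈ P}, (3 - (yf e).card) =
      2 * (P.image Prod.snd).card := by
    rw [← Finset.sum_fiberwise_of_maps_to (g := fun e : {e : X × Y // e ∈ P} => e.val.2)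
      (t := P.image Prod.snd) (fun e _ => Finset.mem_image_of_mem Prod.snd e.2)
      (fun e => 3 - (yf e).card)]
    rw [Finset.sum_congr rfl (fun y hy => ?_), Finset.sum_const, smul_eq_mul, mul_comm]
    obtain ⟨e0, he0P, he0⟩ := Finset.mem_image.mp hy
    have hfib : Finset.univ.filter (fun e : {e : X × Y // e ∈ P} =>
        (fun e : {e : X × Y // e ∈ P} => e.val.2) e = y) = yf ⟨e0, he0P⟩ := by
      simp only [hyf]
      ext e
      simp [he0]
    rw [hfib]
    have hconst : ∀ e ∈ yf (⟨e0, he0P⟩ : {e : X × Y // e ∈ P}),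
        3 - (yf e).card = 3 - (yf (⟨e0, he0P⟩ : {e : X × Y // e ∈ P})).card := by
      intro e he
      have hee : e.val.2 = e0.2 := by
        simpa [hyf] using he
      have : yf e = yf (⟨e0, he0P⟩ : {e : X × Y // e ∈ P}) := by
        simp only [hyf]
        ext e'
        simp [hee]
      rw [this]
    rw [Finset.sum_congr rfl hconst, Finset.sum_const]
    have h1 : 1 ≤ (yf (⟨e0, he0P⟩ : {e : X × Y // e ∈ P})).card :=
      Finset.card_pos.mpr ⟨_, hyfself _⟩
    have h2 := hyf2 (⟨e0, he0P⟩ : {e : X × Y // e ∈ P})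
    set s := (yf (⟨e0, he0P⟩ : {e : X × Y // e ∈ P})).card
    have : s = 1 ∨ s = 2 := by omega
    rcases this with h | h <;> rw [h] <;> rfl
  -- edge/vertex identity
  have hsplitX : ∑ e : {e : X × Y // e ∈ P}, (3 - (xf e).card) +
      ∑ e : {e : X × Y // e ∈ P}, (xf e).card = 3 * P.card := by
    rw [← Finset.sum_add_distrib,
      Finset.sum_congr rfl (fun e _ => (by have := hxf2 e; omega :
        (3 - (xf e).card) + (xf e).card = 3)), Finset.sum_const, smul_eq_mul,
      Finset.card_univ, hcardV, mul_comm]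
  have hsplitY : ∑ e : {e : X × Y // e ∈ P}, (3 - (yf e).card) +
      ∑ e : {e : X × Y // e ∈ P}, (yf e).card = 3 * P.card := by
    rw [← Finset.sum_add_distrib,
      Finset.sum_congr rfl (fun e _ => (by have := hyf2 e; omega :
        (3 - (yf e).card) + (yf e).card = 3)), Finset.sum_const, smul_eq_mul,
      Finset.card_univ, hcardV, mul_comm]
  have hdegsum : ∑ e : {e : X × Y // e ∈ P}, G.degree e = 2 * G.edgeFinset.card :=
    G.sum_degrees_eq_twice_card_edges
  have hdegsum2 : ∑ e : {e : X × Y // e ∈ P}, (G.degree e + 2) =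
      ∑ e : {e : X × Y // e ∈ P}, ((xf e).card + (yf e).card) :=
    Finset.sum_congr rfl (fun e _ => hdegeq e)
  have hEU : 2 * G.edgeFinset.card + 2 * numVerts P = 4 * P.card := by
    have h3 : ∑ e : {e : X × Y // e ∈ P}, (G.degree e + 2) =
        2 * G.edgeFinset.card + 2 * P.card := by
      rw [Finset.sum_add_distrib, hdegsum, Finset.sum_const, smul_eq_mul,
        Finset.card_univ, hcardV, Nat.mul_comm P.card 2]
    have h4 : ∑ e : {e : X × Y // e ∈ P}, ((xf e).card + (yf e).card) =
        ∑ e : {e : X × Y // e ∈ P}, (xf e).card +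
        ∑ e : {e : X × Y // e ∈ P}, (yf e).card := Finset.sum_add_distrib
    have hnv : numVerts P = (P.image Prod.fst).card + (P.image Prod.snd).card := rfl
    omega
  -- isolated common edges
  have hiso : ∀ e f : {e : X × Y // e ∈ P}, e.val ∈ T → e.val ∈ T' →
      G.Adj e f → False := by
    intro e f heT heT' hadj
    obtain ⟨hne, hor⟩ := adjE e f hadj
    have hne' : e.val ≠ f.val := Subtype.coe_ne_coe.mpr hne
    rcases Finset.mem_union.mp f.2 with hf | hf
    · rcases hor with h | h
      · exact hne' (hdu.1 e.val heT f.val hf h)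
      · exact hne' (hdu.2 e.val heT f.val hf h)
    · rcases hor with h | h
      · exact hne' (hdu'.1 e.val heT' f.val hf h)
      · exact hne' (hdu'.2 e.val heT' f.val hf h)
  have hiso2 : ∀ e f : {e : X × Y // e ∈ P}, e.val ∈ T → e.val ∈ T' →
      G.connectedComponentMk e = G.connectedComponentMk f → e = f := by
    intro e f h1 h2 hmk
    by_contra hne
    have hr := SimpleGraph.ConnectedComponent.exact hmk
    have hpos : 0 < G.dist e f := hr.pos_dist_of_ne hne
    obtain ⟨p, hp⟩ := hr.exists_walk_length_eq_dist
    have hnn : ¬ p.Nil := by rw [SimpleGraph.Walk.nil_iff_length_eq]; omega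
    obtain ⟨u, hadj, q, rfl⟩ := SimpleGraph.Walk.not_nil_iff.mp hnn
    exact hiso e u h1 h2 hadj
  -- lower bound on number of components
  have hk1 : (T ∩ T').card + 1 ≤ Nat.card G.ConnectedComponent := by
    obtain ⟨e0, he0⟩ := Finset.card_pos.mp hd
    have he0T : e0 ∈ T := (Finset.mem_sdiff.mp he0).1
    have he0nT' : e0 ∉ T' := (Finset.mem_sdiff.mp he0).2
    set Q : Finset (X × Y) := insert e0 (T ∩ T') with hQ
    have hQP : ∀ x ∈ Q, x ∈ P := by
      intro x hx
      rcases Finset.mem_insert.mp hx with h | h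
      · exact hsubT (h ▸ he0T)
      · exact hsubT (Finset.mem_inter.mp h).1
    letI : Fintype G.ConnectedComponent := Fintype.ofFinite _
    have hinj : Function.Injective (fun x : {x : X × Y // x ∈ Q} =>
        G.connectedComponentMk ⟨x.val, hQP x.val x.2⟩) := by
      intro x y h
      by_contra hne
      have hvne : x.val ≠ y.val := fun hh => hne (Subtype.ext hh)
      have hvne2 : (⟨x.val, hQP x.val x.2⟩ : {e : X × Y // e ∈ P}) ≠
          ⟨y.val, hQP y.val y.2⟩ := fun hh => hvne (Subtype.mk_eq_mk.mp hh)
      rcases Finset.mem_insert.mp x.2 with hx | hx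
      · rcases Finset.mem_insert.mp y.2 with hy | hy
        · exact hvne (hx.trans hy.symm)
        · obtain ⟨hy1, hy2⟩ := Finset.mem_inter.mp hy
          exact hvne2.symm (hiso2 _ _ hy1 hy2 h.symm)
      · obtain ⟨hx1, hx2⟩ := Finset.mem_inter.mp hx
        exact hvne2 (hiso2 _ _ hx1 hx2 h)
    have hcQ : Fintype.card {x : X × Y // x ∈ Q} = (T ∩ T').card + 1 := by
      rw [Fintype.card_coe, hQ, Finset.card_insert_of_notMem
        (fun hh => he0nT' (Finset.mem_inter.mp hh).2)]
    calc (T ∩ T').card + 1 = Fintype.card {x : X × Y // x ∈ Q} := hcQ.symm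
      _ ≤ Fintype.card G.ConnectedComponent := Fintype.card_le_of_injective _ hinj
      _ = Nat.card G.ConnectedComponent := Nat.card_eq_fintype_card.symm
  -- general graph bounds
  have A1 : P.card ≤ G.edgeFinset.card + Nat.card G.ConnectedComponent := by
    have := gen1 G
    rwa [hcardV] at this
  have A2 : 8 * Nat.card G.ConnectedComponent + 6 * G.edgeFinset.card ≤ 8 * P.card := by
    have := gen2 G hdeg2 htri
    rwa [hcardV] at this
  have A3 : Nat.card G.ConnectedComponent ≤ P.card := by
    have := gen3 G
    rwa [hcardV] at this
  -- cardinalities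
  have hNcard : P.card = t + (T \ T').card := by
    have h1 := Finset.card_union_add_card_inter T T'
    rw [← hPdef] at h1
    have h5 : (T' \ T).card = (T \ T').card := Finset.card_sdiff_comm (hT'.trans hT.symm)
    have h2 := Finset.card_inter_add_card_sdiff T T'
    have h3 := Finset.card_inter_add_card_sdiff T' T
    have h4 : (T' ∩ T).card = (T ∩ T').card := by rw [Finset.inter_comm]
    omega
  have hIcard : (T ∩ T').card + (T \ T').card = t := by
    rw [← hT]; exact Finset.card_inter_add_card_sdiff T T'
  have hLdef : numComponents P = Nat.card G.ConnectedComponent := rfl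
  have key3 : 4 * Nat.card G.ConnectedComponent + 2 * t + 2 * (T \ T').card ≤
      3 * numVerts P := by omega
  rw [hLdef]
  refine ⟨⟨by push_cast; omega, by push_cast; omega⟩, ?_, by push_cast; omega⟩
  have hceil : (⌈(4 * ((Nat.card G.ConnectedComponent : ℚ) - ((t : ℚ) - ((T \ T').card : ℚ))) -
      2 * ((T \ T').card : ℚ)) / 3⌉ : ℤ) ≤ (numVerts P : ℤ) - 2 * t := by
    rw [Int.ceil_le]
    rw [div_le_iff₀ (by norm_num : (0:ℚ) < 3)]
    have : (4:ℚ) * (Nat.card G.ConnectedComponent : ℚ) + 2 * t + 2 * (T \ T').card ≤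
        3 * numVerts P := by exact_mod_cast key3
    push_cast
    linarith
  omega

end

end DT
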